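/- arXiv:2602.02042 — 3 statements merged into one kernel-verified Lean document; each statement's English description precedes it below -/
import Mathlib

section
/- Let K be a field of characteristic p > 0 and f = xᵖ + y^(p−1) ∈ K[[x,y]]. Then the Milnor number μ(f) = dim_K K[[x,y]]/⟨∂f/∂x, ∂f/∂y⟩ is infinite, while the Tjurina number τ(f) = dim_K K[[x,y]]/⟨f, ∂f/∂x, ∂f/∂y⟩ equals p·(p−2). -/
/-!
In characteristic `p` we have `∂f/∂x = p xᵖ⁻¹ = 0` and `∂f/∂y = (p - 1) yᵖ⁻² = -yᵖ⁻²`, so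
`j(f) = ⟨yᵖ⁻²⟩` and, as `f = xᵖ + y · yᵖ⁻²`, `tj(f) = ⟨xᵖ, yᵖ⁻²⟩`. A power series lies in the
monomial ideal `⟨xᵃ, yᵇ⟩` exactly when its coefficients of `xⁱ yʲ` with `i < a`, `j < b` vanish,
so these `a b` coefficients identify the quotient with `K^(a b)`; this gives `τ(f) = p (p - 2)`.
The quotient by `⟨yᵖ⁻²⟩` surjects onto the one by `⟨xᵃ, yᵖ⁻²⟩` for every `a`, so `μ(f) = ∞`.
-/

open MvPowerSeries

/-- Formal partial derivative `∂f/∂xᵢ` of a multivariate formal power series. -/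
noncomputable def pderiv {n : ℕ} {K : Type*} [Field K] (i : Fin n)
    (f : MvPowerSeries (Fin n) K) : MvPowerSeries (Fin n) K :=
  fun d => ((d i : K) + 1) * coeff (d + Finsupp.single i 1) f

/-- The Jacobian ideal `j(f) = ⟨∂f/∂x₁, …, ∂f/∂xₙ⟩`. -/
noncomputable def jIdeal {n : ℕ} {K : Type*} [Field K]
    (f : MvPowerSeries (Fin n) K) : Ideal (MvPowerSeries (Fin n) K) :=
  Ideal.span (Set.range fun i => pderiv i f)

/-- The Tjurina ideal `tj(f) = ⟨f, ∂f/∂x₁, …, ∂f/∂xₙ⟩`. -/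
noncomputable def tjIdeal {n : ℕ} {K : Type*} [Field K]
    (f : MvPowerSeries (Fin n) K) : Ideal (MvPowerSeries (Fin n) K) :=
  Ideal.span (insert f (Set.range fun i => pderiv i f))

/-- The maximal ideal `⟨x₁, …, xₙ⟩` of `K[[x₁,…,xₙ]]`. -/
noncomputable def mIdeal (n : ℕ) (K : Type*) [Field K] : Ideal (MvPowerSeries (Fin n) K) :=
  Ideal.span (Set.range (X : Fin n → MvPowerSeries (Fin n) K))

section Derivatives

variable {K : Type*} [Field K]

theorem pderiv_eq_mvPowerSeries_pderiv {n : ℕ} (i : Fin n) (f : MvPowerSeries (Fin n) K) :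
    pderiv i f = MvPowerSeries.pderiv K i f := by
  ext d
  rw [coeff_pderiv]
  exact mul_comm _ _

theorem jIdeal_fin_two (f : MvPowerSeries (Fin 2) K) :
    jIdeal f = Ideal.span {pderiv 0 f, pderiv 1 f} := by
  rw [jIdeal]
  congr 1
  ext
  simp [Fin.exists_fin_two, eq_comm]

theorem tjIdeal_fin_two (f : MvPowerSeries (Fin 2) K) :
    tjIdeal f = Ideal.span {f, pderiv 0 f, pderiv 1 f} := by
  rw [tjIdeal]
  congr 2
  ext
  simp [Fin.exists_fin_two, eq_comm]

variable (p : ℕ) [CharP K p]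

theorem pderiv_zero_X_pow_char_add_X_pow :
    pderiv 0 (X 0 ^ p + X 1 ^ (p - 1) : MvPowerSeries (Fin 2) K) = 0 := by
  have hcast : (p : MvPowerSeries (Fin 2) K) = 0 := by
    rw [← map_natCast (C (σ := Fin 2) (R := K)), CharP.cast_eq_zero, map_zero]
  simp [pderiv_eq_mvPowerSeries_pderiv, hcast, pderiv_X_of_ne]

theorem pderiv_one_X_pow_char_add_X_pow_pred (hp : 2 ≤ p) :
    pderiv 1 (X 0 ^ p + X 1 ^ (p - 1) : MvPowerSeries (Fin 2) K) = -X 1 ^ (p - 2) := by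
  have hpred : ((p - 1 : ℕ) : MvPowerSeries (Fin 2) K) = -1 := by
    rw [← map_natCast (C (σ := Fin 2) (R := K)), Nat.cast_sub (by omega), CharP.cast_eq_zero]
    simp
  simp [pderiv_eq_mvPowerSeries_pderiv, hpred, pderiv_X_of_ne, Nat.sub_sub]

theorem jIdeal_X_pow_char_add_X_pow_pred (hp : 2 ≤ p) :
    jIdeal (X 0 ^ p + X 1 ^ (p - 1) : MvPowerSeries (Fin 2) K) = Ideal.span {X 1 ^ (p - 2)} := by
  rw [jIdeal_fin_two, pderiv_zero_X_pow_char_add_X_pow,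
    pderiv_one_X_pow_char_add_X_pow_pred p hp, Ideal.span_insert_zero, Ideal.span_singleton_neg]

theorem tjIdeal_X_pow_char_add_X_pow_pred (hp : 2 ≤ p) :
    tjIdeal (X 0 ^ p + X 1 ^ (p - 1) : MvPowerSeries (Fin 2) K) =
      Ideal.span {X 0 ^ p, X 1 ^ (p - 2)} := by
  have hy : (X 1 ^ (p - 1) : MvPowerSeries (Fin 2) K) = X 1 * X 1 ^ (p - 2) := by
    rw [← pow_succ']; congr 1; omega
  rw [tjIdeal_fin_two, pderiv_zero_X_pow_char_add_X_pow,
    pderiv_one_X_pow_char_add_X_pow_pred p hp, Set.insert_comm, Ideal.span_insert_zero,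
    Ideal.span_insert, Ideal.span_singleton_neg, ← Ideal.span_insert, hy,
    Ideal.span_pair_add_mul_right]

end Derivatives

section MonomialIdeal

variable {K : Type*} [Field K]

open Finsupp in
theorem single_zero_add_single_one (d : Fin 2 →₀ ℕ) : single 0 (d 0) + single 1 (d 1) = d := by
  ext i
  fin_cases i <;> simp

theorem mem_span_X_pow_pair_iff {a b : ℕ} {g : MvPowerSeries (Fin 2) K} :
    g ∈ Ideal.span {X 0 ^ a, X 1 ^ b} ↔ ∀ d : Fin 2 →₀ ℕ, d 0 < a → d 1 < b → coeff d g = 0 := by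
  constructor
  · rintro hg d ha hb
    obtain ⟨u, v, rfl⟩ := Ideal.mem_span_pair.mp hg
    rw [map_add, X_pow_dvd_iff.mp (dvd_mul_left _ u) d ha,
      X_pow_dvd_iff.mp (dvd_mul_left _ v) d hb, add_zero]
  · intro hg
    -- split `g` into its part of `x`-degree `< a`, which is divisible by `y ^ b`, and the rest
    let low : MvPowerSeries (Fin 2) K := fun d => if d 0 < a then coeff d g else 0
    have coeff_low (d) : coeff d low = if d 0 < a then coeff d g else 0 := rfl
    obtain ⟨u, hu⟩ : X 0 ^ a ∣ g - low := X_pow_dvd_iff.mpr fun d ha => by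
      rw [map_sub, coeff_low, if_pos ha, sub_self]
    obtain ⟨v, hv⟩ : X 1 ^ b ∣ low := X_pow_dvd_iff.mpr fun d hb => by
      rw [coeff_low]
      split_ifs with ha
      exacts [hg d ha hb, rfl]
    exact Ideal.mem_span_pair.mpr ⟨u, v, by rw [mul_comm, ← hu, mul_comm, ← hv, sub_add_cancel]⟩

noncomputable def lowCoeffs (a b : ℕ) : MvPowerSeries (Fin 2) K →ₗ[K] (Fin a × Fin b → K) :=
  LinearMap.pi fun c => coeff (Finsupp.single 0 (c.1 : ℕ) + Finsupp.single 1 (c.2 : ℕ))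

theorem lowCoeffs_surjective (a b : ℕ) : Function.Surjective (lowCoeffs (K := K) a b) := by
  intro c
  let g : MvPowerSeries (Fin 2) K := fun d =>
    if h : d 0 < a ∧ d 1 < b then c (⟨d 0, h.1⟩, ⟨d 1, h.2⟩) else 0
  refine ⟨g, funext fun ⟨i, j⟩ => ?_⟩
  show g (Finsupp.single 0 (i : ℕ) + Finsupp.single 1 (j : ℕ)) = c (i, j)
  simp [g]

theorem ker_lowCoeffs (a b : ℕ) :
    LinearMap.ker (lowCoeffs (K := K) a b) =
      (Ideal.span {(X 0 ^ a : MvPowerSeries (Fin 2) K), X 1 ^ b}).restrictScalars K := by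
  ext g
  rw [LinearMap.mem_ker, Submodule.restrictScalars_mem, mem_span_X_pow_pair_iff, funext_iff]
  constructor
  · intro hg d ha hb
    rw [← single_zero_add_single_one d]
    exact hg (⟨d 0, ha⟩, ⟨d 1, hb⟩)
  · rintro hg ⟨i, j⟩
    exact hg _ (by simp) (by simp)

noncomputable def quotSpanXPowPairEquiv (a b : ℕ) :
    (MvPowerSeries (Fin 2) K ⧸ Ideal.span {(X 0 ^ a : MvPowerSeries (Fin 2) K), X 1 ^ b}) ≃ₗ[K]
      (Fin a × Fin b → K) :=
  (Submodule.Quotient.restrictScalarsEquiv K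
      (Ideal.span {(X 0 ^ a : MvPowerSeries (Fin 2) K), X 1 ^ b})).symm.trans <|
    (Submodule.quotEquivOfEq _ _ (ker_lowCoeffs a b).symm).trans <|
      (lowCoeffs a b).quotKerEquivOfSurjective (lowCoeffs_surjective a b)

theorem finiteDimensional_quot_span_X_pow_pair (a b : ℕ) :
    FiniteDimensional K
      (MvPowerSeries (Fin 2) K ⧸ Ideal.span {(X 0 ^ a : MvPowerSeries (Fin 2) K), X 1 ^ b}) :=
  (quotSpanXPowPairEquiv a b).symm.finiteDimensional

theorem finrank_quot_span_X_pow_pair (a b : ℕ) :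
    Module.finrank K
      (MvPowerSeries (Fin 2) K ⧸ Ideal.span {(X 0 ^ a : MvPowerSeries (Fin 2) K), X 1 ^ b}) =
      a * b := by
  simp [(quotSpanXPowPairEquiv a b).finrank_eq]

theorem not_finiteDimensional_quot_span_X_pow {b : ℕ} (hb : b ≠ 0) :
    ¬ FiniteDimensional K
      (MvPowerSeries (Fin 2) K ⧸ Ideal.span {(X 1 ^ b : MvPowerSeries (Fin 2) K)}) := by
  intro hfin
  set r :=
    Module.finrank K (MvPowerSeries (Fin 2) K ⧸ Ideal.span {(X 1 ^ b : MvPowerSeries (Fin 2) K)})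
  -- a finite-dimensional space cannot surject onto the `(r + 1) * b`-dimensional quotient
  have hle : Ideal.span {X 1 ^ b} ≤
      Ideal.span {X 0 ^ (r + 1), (X 1 ^ b : MvPowerSeries (Fin 2) K)} :=
    Ideal.span_mono (Set.subset_insert _ _)
  have := LinearMap.finrank_le_finrank_of_surjective
    (f := (Ideal.Quotient.factorₐ K hle).toLinearMap) (Ideal.Quotient.factor_surjective hle)
  rw [finrank_quot_span_X_pow_pair] at this
  nlinarith [Nat.one_le_iff_ne_zero.mpr hb]

end MonomialIdeal

theorem stmt_2_general {K : Type*} [Field K] (p : ℕ) [CharP K p] (h3 : 3 ≤ p)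
    (f : MvPowerSeries (Fin 2) K) (hf : f = X 0 ^ p + X 1 ^ (p - 1)) :
    ¬ FiniteDimensional K (MvPowerSeries (Fin 2) K ⧸ jIdeal f) ∧
    FiniteDimensional K (MvPowerSeries (Fin 2) K ⧸ tjIdeal f) ∧
    Module.finrank K (MvPowerSeries (Fin 2) K ⧸ tjIdeal f) = p * (p - 2) := by
  subst hf
  rw [jIdeal_X_pow_char_add_X_pow_pred p (by omega),
    tjIdeal_X_pow_char_add_X_pow_pred p (by omega)]
  exact ⟨not_finiteDimensional_quot_span_X_pow (by omega),
    finiteDimensional_quot_span_X_pow_pair p (p - 2), finrank_quot_span_X_pow_pair p (p - 2)⟩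

/-- For `f = xᵖ + y^(p-1)` in characteristic `p ≥ 3`: `μ(f) = ∞` while `τ(f) = p(p-2)`. -/
theorem stmt_2 {K : Type*} [Field K] (p : ℕ) [CharP K p] (hp : p.Prime) (h3 : 3 ≤ p)
    (f : MvPowerSeries (Fin 2) K) (hf : f = X 0 ^ p + X 1 ^ (p - 1)) :
    ¬ FiniteDimensional K (MvPowerSeries (Fin 2) K ⧸ jIdeal f) ∧
    FiniteDimensional K (MvPowerSeries (Fin 2) K ⧸ tjIdeal f) ∧
    Module.finrank K (MvPowerSeries (Fin 2) K ⧸ tjIdeal f) = p * (p - 2) :=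
  stmt_2_general p h3 f hf
end

section
/- Let K be a field of characteristic p > 0 and f ∈ m² ⊆ K[[x]] a univariate power series with finite Milnor number μ(f). If the order (multiplicity) m = ord(f) is not divisible by p, then f is right equivalent to x^m, and μ(f) = m − 1. -/
/-!
Write `f = X^m * u` with `u` a unit. As `m` is invertible in `K`, Hensel's lemma in the
`X`-adically complete ring `K⟦X⟧` gives an `m`-th root `v` of `u`, so `f = (X * v)^m`, and the
substitution `X ↦ X * v`, having invertible linear coefficient, is an automorphism of `K⟦X⟧`.
The derivative `f'` has leading term `m * coeff m f * X^(m-1)` with `m * coeff m f ≠ 0`, hence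
`(f') = (X^(m-1))` and the Milnor algebra `K⟦X⟧ ⧸ (f')` has dimension `m - 1`.
-/
open PowerSeries

theorem HenselianRing.exists_pow_eq {R : Type*} [CommRing R] {I : Ideal R} [HenselianRing R I]
    {m : ℕ} (hm : m ≠ 0) (hmR : IsUnit (m : R)) {u a₀ : R} (ha₀ : IsUnit a₀)
    (h : a₀ ^ m - u ∈ I) : ∃ a, a ^ m = u ∧ a - a₀ ∈ I := by
  have hderiv : (Polynomial.derivative (Polynomial.X ^ m - Polynomial.C u)).eval a₀
      = m * a₀ ^ (m - 1) := by
    simp [Polynomial.derivative_X_pow]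
  obtain ⟨a, ha, haI⟩ := HenselianRing.is_henselian (Polynomial.X ^ m - Polynomial.C u)
    (Polynomial.monic_X_pow_sub_C u hm) a₀ (by simpa using h)
    (by rw [hderiv]; exact (hmR.mul (ha₀.pow _)).map _)
  exact ⟨a, by simpa [sub_eq_zero] using ha, haI⟩

namespace PowerSeries

theorem exists_pow_eq_of_isUnit {K : Type*} [Field K] [IsAlgClosed K] {m : ℕ}
    (hm : (m : K) ≠ 0) {u : K⟦X⟧} (hu : IsUnit u) : ∃ v : K⟦X⟧, v ^ m = u ∧ IsUnit v := by
  have hm0 : m ≠ 0 := by rintro rfl; exact hm Nat.cast_zero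
  obtain ⟨c, hc⟩ := IsAlgClosed.exists_pow_nat_eq (constantCoeff u) (Nat.pos_of_ne_zero hm0)
  have hcu : IsUnit c := by
    refine (isUnit_pow_iff hm0).mp ?_
    rw [hc]
    exact hu.map _
  obtain ⟨v, hvu, hv⟩ := HenselianRing.exists_pow_eq (I := Ideal.span {(X : K⟦X⟧)}) (u := u) hm0
    (hm.isUnit.map (C (R := K))) (hcu.map C) (by
      rw [Ideal.mem_span_singleton, X_dvd_iff]
      simp [hc])
  refine ⟨v, hvu, ?_⟩
  rw [Ideal.mem_span_singleton, X_dvd_iff, map_sub, constantCoeff_C, sub_eq_zero] at hv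
  rw [isUnit_iff_constantCoeff, hv]
  exact hcu

variable {R : Type*} [CommRing R]

noncomputable def substAlgEquiv (P : R⟦X⟧) (hP : constantCoeff P = 0) (hP' : IsUnit (coeff 1 P)) :
    R⟦X⟧ ≃ₐ[R] R⟦X⟧ :=
  have hsP := HasSubst.of_constantCoeff_zero' hP
  have hsQ := HasSubst.substInvOfIsUnit P hP'
  AlgEquiv.ofAlgHom (substAlgHom hsP) (substAlgHom hsQ)
    (AlgHom.ext fun f => by
      simp only [AlgHom.comp_apply, coe_substAlgHom, AlgHom.id_apply]
      rw [subst_comp_subst_apply hsQ hsP, subst_substInvOfIsUnit_left P hP hP', X_subst])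
    (AlgHom.ext fun f => by
      simp only [AlgHom.comp_apply, coe_substAlgHom, AlgHom.id_apply]
      rw [subst_comp_subst_apply hsP hsQ, subst_substInvOfIsUnit_right P hP hP', X_subst])

theorem substAlgEquiv_X (P : R⟦X⟧) (hP : constantCoeff P = 0) (hP' : IsUnit (coeff 1 P)) :
    substAlgEquiv P hP hP' X = P := by
  simp [substAlgEquiv, coe_substAlgHom, subst_X (HasSubst.of_constantCoeff_zero' hP)]

theorem exists_X_pow_mul_unit_of_order_eq {f : R⟦X⟧} {n : ℕ} (hf : f.order = n)
    (hn : IsUnit (coeff n f)) : ∃ u : R⟦X⟧ˣ, (X : R⟦X⟧) ^ n * u = f := by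
  obtain ⟨-, hlow⟩ := order_eq_nat.mp hf
  obtain ⟨u, rfl⟩ := X_pow_dvd_iff.mpr hlow
  refine ⟨(isUnit_iff_constantCoeff.mpr ?_).unit, rfl⟩
  simpa [coeff_X_pow_mul'] using hn

theorem order_derivative_of_order_eq_succ {f : R⟦X⟧} {n : ℕ} (hf : f.order = n + 1)
    (hn : coeff (n + 1) f * (n + 1) ≠ 0) : (d⁄dX R f).order = n := by
  obtain ⟨-, hlow⟩ := order_eq_nat.mp hf
  refine order_eq_nat.mpr ⟨by rwa [coeff_derivative], fun i hi => ?_⟩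
  rw [coeff_derivative, hlow (i + 1) (Nat.succ_lt_succ hi), zero_mul]

theorem finrank_quotient_span_X_pow {K : Type*} [Field K] (n : ℕ) :
    Module.finrank K (K⟦X⟧ ⧸ Ideal.span {(X : K⟦X⟧) ^ n}) = n := by
  let coeffs : K⟦X⟧ →ₗ[K] Fin n → K := LinearMap.pi fun i => coeff (i : ℕ)
  have hsurj : Function.Surjective coeffs := fun c =>
    ⟨mk fun i => if h : i < n then c ⟨i, h⟩ else 0, funext fun i => by simp [coeffs]⟩
  have hker : LinearMap.ker coeffs = (Ideal.span {(X : K⟦X⟧) ^ n}).restrictScalars K := by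
    ext f
    simp [coeffs, Ideal.mem_span_singleton, X_pow_dvd_iff, funext_iff, Fin.forall_iff]
  rw [((Submodule.Quotient.restrictScalarsEquiv K _).symm.trans
    ((Submodule.quotEquivOfEq _ _ hker.symm).trans
      (coeffs.quotKerEquivOfSurjective hsurj))).finrank_eq]
  simp

end PowerSeries

theorem stmt_16_general {K : Type*} [Field K] [IsAlgClosed K] (p : ℕ) [CharP K p]
    (f : PowerSeries K) (m : ℕ) (hm : f.order = m)
    (hpm : ¬ p ∣ m) :
    (∃ φ : PowerSeries K ≃ₐ[K] PowerSeries K, φ f = PowerSeries.X ^ m) ∧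
    Module.finrank K (PowerSeries K ⧸ Ideal.span {derivative K f}) = m - 1 := by
  have hmK : (m : K) ≠ 0 := by rwa [Ne, CharP.cast_eq_zero_iff K p]
  have hcoeff : coeff m f ≠ 0 := (order_eq_nat.mp hm).1
  obtain ⟨u, hf⟩ := exists_X_pow_mul_unit_of_order_eq hm hcoeff.isUnit
  obtain ⟨v, hvu, hv⟩ := exists_pow_eq_of_isUnit hmK u.isUnit
  have hP : constantCoeff (X * v) = 0 := by simp
  have hP' : IsUnit (coeff 1 (X * v)) := by
    simpa [coeff_succ_X_mul 0 v] using isUnit_iff_constantCoeff.mp hv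
  refine ⟨⟨(substAlgEquiv (X * v) hP hP').symm, ?_⟩, ?_⟩
  · rw [AlgEquiv.symm_apply_eq, map_pow, substAlgEquiv_X, mul_pow, hvu, hf]
  · obtain ⟨n, rfl⟩ : ∃ n, m = n + 1 := Nat.exists_eq_succ_of_ne_zero (by rintro rfl; simp at hmK)
    have hd : (d⁄dX K f).order = n :=
      order_derivative_of_order_eq_succ hm (mul_ne_zero hcoeff (by exact_mod_cast hmK))
    obtain ⟨w, hw⟩ := exists_X_pow_mul_unit_of_order_eq hd (order_eq_nat.mp hd).1.isUnit
    rw [← hw, Ideal.span_singleton_mul_right_unit w.isUnit, finrank_quotient_span_X_pow]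
    rfl

/-- If a univariate power series `f` over an algebraically closed field of
characteristic `p > 0` has finite Milnor number and order `m ≥ 2` not divisible
by `p`, then `f` is right equivalent to `x^m` and `μ(f) = m - 1`. -/
theorem stmt_16 {K : Type*} [Field K] [IsAlgClosed K] (p : ℕ) [CharP K p] (hp : 0 < p)
    (f : PowerSeries K) (m : ℕ) (hm : f.order = m) (hm2 : 2 ≤ m)
    (hfin : FiniteDimensional K (PowerSeries K ⧸ Ideal.span {derivative K f}))
    (hpm : ¬ p ∣ m) :
    (∃ φ : PowerSeries K ≃ₐ[K] PowerSeries K, φ f = PowerSeries.X ^ m) ∧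
    Module.finrank K (PowerSeries K ⧸ Ideal.span {derivative K f}) = m - 1 :=
  stmt_16_general p f m hm hpm
end

section
/- Let K be a field of characteristic p > 0 and f = xᵖ + a_{p+1}x^{p+1} + … ∈ K[[x]] a univariate power series of order p whose coefficient sequence begins with xᵖ. For t ∈ K, set f_t = f + t·x^{p+1}. If f_t is right equivalent to f_{t'} then t = t'. -/
open PowerSeries

/-! Write `f_t = X ^ p * g_t` with `g_t = g + t X`. An automorphism `φ` of `K⟦X⟧` sends `X` to
`X * w`, so `φ f_t = X ^ p * (w ^ p * φ g_t)`. Comparing constant terms of the cofactors of `X ^ p`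
gives `w₀ ^ p = 1`, hence `w₀ = 1` since Frobenius is injective. Comparing linear terms, the
contribution `coeff 1 (w ^ p) = p w₁ w₀ ^ (p - 1)` vanishes in characteristic `p`, and `φ` multiplies
linear coefficients by `w₀ = 1`, so the coefficient `g₁ + t` of `X ^ (p + 1)` is preserved. -/

namespace PowerSeries

section AlgHom

variable {R F : Type*} [CommRing R] [FunLike F R⟦X⟧ R⟦X⟧] [AlgHomClass F R R⟦X⟧ R⟦X⟧]

theorem not_isUnit_constantCoeff_algEquiv_X [Nontrivial R] (φ : R⟦X⟧ ≃ₐ[R] R⟦X⟧) :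
    ¬IsUnit (constantCoeff (φ X)) := by
  intro h
  have hX : IsUnit (φ.symm (φ X)) := (isUnit_iff_constantCoeff.mpr h).map φ.symm
  rw [AlgEquiv.symm_apply_apply, isUnit_iff_constantCoeff, constantCoeff_X] at hX
  exact not_isUnit_zero hX

@[simp]
theorem algHomClass_apply_C (φ : F) (a : R) : φ (C a) = C a := by
  rw [C_eq_algebraMap, AlgHomClass.commutes]

variable {φ : F}

theorem constantCoeff_algHom_apply (hφ : constantCoeff (φ X) = 0) (g : R⟦X⟧) :
    constantCoeff (φ g) = constantCoeff g := by
  conv_lhs => rw [eq_X_mul_shift_add_const g]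
  simp [hφ]

theorem coeff_one_algHom_apply (hφ : constantCoeff (φ X) = 0) (g : R⟦X⟧) :
    coeff 1 (φ g) = coeff 1 (φ X) * coeff 1 g := by
  conv_lhs => rw [eq_X_mul_shift_add_const g]
  simp [coeff_one_mul, constantCoeff_algHom_apply hφ]

end AlgHom

theorem coeff_one_eq_of_algEquiv_X_pow_mul {K : Type*} [Field K] {p : ℕ} [CharP K p]
    (hp : p.Prime) (φ : K⟦X⟧ ≃ₐ[K] K⟦X⟧) {g g' : K⟦X⟧} (hg : constantCoeff g = 1)
    (hg' : constantCoeff g' = 1) (h : φ (X ^ p * g) = X ^ p * g') :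
    coeff 1 g = coeff 1 g' := by
  have := ExpChar.prime (R := K) hp
  have hu : constantCoeff (φ X) = 0 := by
    simpa [isUnit_iff_ne_zero] using not_isUnit_constantCoeff_algEquiv_X φ
  obtain ⟨w, hw⟩ := X_dvd_iff.mpr hu
  have hg'_eq : w ^ p * φ g = g' := by
    apply mul_left_cancel₀ (pow_ne_zero p X_ne_zero)
    rw [← h, map_mul, map_pow, hw]
    ring
  have hw0 : constantCoeff w = 1 := by
    apply frobenius_inj K p
    simpa [frobenius_def, constantCoeff_algHom_apply hu, hg, hg'] using
      congrArg constantCoeff hg'_eq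
  have hu1 : coeff 1 (φ X) = 1 := by
    rw [hw, coeff_one_mul]
    simp [hw0]
  have := congrArg (coeff 1) hg'_eq
  rw [coeff_one_mul, coeff_one_pow, CharP.cast_eq_zero, coeff_one_algHom_apply hu, hu1,
    constantCoeff_algHom_apply hu, map_pow, hw0, hg] at this
  simpa using this

end PowerSeries

/-- For `f = xᵖ + a_{p+1}x^{p+1} + …` in characteristic `p > 0`, the unfoldings
`f_t = f + t·x^{p+1}` are pairwise right inequivalent: `f_t ∼ f_{t'}` implies `t = t'`. -/
theorem stmt_17 {K : Type*} [Field K] (p : ℕ) [CharP K p] (hp : p.Prime)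
    (f : PowerSeries K) (h0 : ∀ i < p, PowerSeries.coeff i f = 0)
    (h1 : PowerSeries.coeff p f = 1) (t t' : K)
    (h : ∃ φ : PowerSeries K ≃ₐ[K] PowerSeries K,
      φ (f + PowerSeries.C t * PowerSeries.X ^ (p + 1)) =
        f + PowerSeries.C t' * PowerSeries.X ^ (p + 1)) :
    t = t' := by
  obtain ⟨φ, hφ⟩ := h
  obtain ⟨g, rfl⟩ := X_pow_dvd_iff.mpr h0
  have hg : constantCoeff g = 1 := by simpa [coeff_X_pow_mul'] using h1
  have hshift (s : K) : X ^ p * g + C s * X ^ (p + 1) = X ^ p * (g + C s * X) := by ring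
  rw [hshift, hshift] at hφ
  simpa using coeff_one_eq_of_algEquiv_X_pow_mul hp φ (by simp [hg]) (by simp [hg]) hφ
end
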